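/- arXiv:2112.05316 — 2 statements merged into one kernel-verified Lean document; each statement's English description precedes it below -/
import Mathlib

section
/- Suppose G_1,…,G_n (n ≥ 2) are vertex-disjoint graphs, each G_i containing a clique K_i = {u_{i,1},…,u_{i,p}}, and G is the K_p-gluing obtained by identifying u_{1,q},…,u_{n,q} as u_q for each q ∈ [p]. Then P_DP(G,m) ≤ (∏_{i=1}^n P'_DP(G_i,K_i,m)) / (∏_{i=0}^{p-1}(m-i))^{n-1} for all m ≥ p. -/
open SimpleGraph

/-- An `m`-fold cover of a graph `G`, with lists canonically labeled by `Fin m`. -/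
structure DPCover {V : Type} (G : SimpleGraph V) (m : ℕ) where
  H : SimpleGraph (V × Fin m)
  part_complete : ∀ (v : V) (a b : Fin m), a ≠ b → H.Adj (v, a) (v, b)
  cross : ∀ (u v : V) (a b : Fin m), u ≠ v → H.Adj (u, a) (v, b) → G.Adj u v
  matching_right : ∀ (u v : V) (a b b' : Fin m), u ≠ v →
    H.Adj (u, a) (v, b) → H.Adj (u, a) (v, b') → b = b'
  matching_left : ∀ (u v : V) (a a' b : Fin m), u ≠ v →
    H.Adj (u, a) (v, b) → H.Adj (u, a') (v, b) → a = a'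

/-- A cover is full if every matching between lists of adjacent vertices is perfect. -/
def DPCover.IsFull {V : Type} {G : SimpleGraph V} {m : ℕ} (C : DPCover G m) : Prop :=
  ∀ u v : V, G.Adj u v → ∀ a : Fin m, ∃ b : Fin m, C.H.Adj (u, a) (v, b)

/-- An `H`-coloring: a choice of one list element per vertex forming an independent set. -/
def DPCover.IsColoring {V : Type} {G : SimpleGraph V} {m : ℕ} (C : DPCover G m)
    (c : V → Fin m) : Prop :=
  ∀ u v : V, ¬ C.H.Adj (u, c u) (v, c v)

/-- The number of `H`-colorings of `G` with respect to the cover `C`. -/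
noncomputable def dpCount {V : Type} {G : SimpleGraph V} {m : ℕ} (C : DPCover G m) : ℕ :=
  Nat.card {c : V → Fin m // C.IsColoring c}

/-- `N(P, C)`: the number of `H`-colorings containing the set `P` of cover vertices. -/
noncomputable def NCount {V : Type} {G : SimpleGraph V} {m : ℕ} (C : DPCover G m)
    (P : Set (V × Fin m)) : ℕ :=
  Nat.card {c : V → Fin m // C.IsColoring c ∧ ∀ p ∈ P, c p.1 = p.2}

/-- The DP color function: minimum number of colorings over all `m`-fold covers. -/
noncomputable def PDP {V : Type} (G : SimpleGraph V) (m : ℕ) : ℕ :=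
  sInf {n : ℕ | ∃ C : DPCover G m, dpCount C = n}

/-- The number of proper `m`-colorings (the chromatic polynomial evaluated at `m`). -/
noncomputable def properCount {V : Type} (G : SimpleGraph V) (m : ℕ) : ℕ :=
  Nat.card {c : V → Fin m // ∀ u v : V, G.Adj u v → c u ≠ c v}

/-- A cover has a canonical labeling if lists can be renamed so all cross edges are
`(u,j)(v,j)`. -/
def DPCover.HasCanonicalLabeling {V : Type} {G : SimpleGraph V} {m : ℕ}
    (C : DPCover G m) : Prop :=
  ∃ σ : V → Equiv.Perm (Fin m), ∀ u v : V, G.Adj u v → ∀ j : Fin m,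
    C.H.Adj (u, σ u j) (v, σ v j)

/-- `G` (on vertex set `W`) is a `K_p`-gluing of the vertex-disjoint graphs `Gs i`
along the cliques `u i : Fin p → V i`, via the identification maps `φ i`. -/
structure IsCliqueGluing {n p : ℕ} {V : Fin n → Type} {W : Type}
    (Gs : ∀ i, SimpleGraph (V i)) (u : ∀ i, Fin p → V i)
    (G : SimpleGraph W) (φ : ∀ i, V i → W) : Prop where
  phi_inj : ∀ i, Function.Injective (φ i)
  u_inj : ∀ i, Function.Injective (u i)
  clique : ∀ i (q q' : Fin p), q ≠ q' → (Gs i).Adj (u i q) (u i q')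
  glue : ∀ i j q, φ i (u i q) = φ j (u j q)
  covers : ∀ w : W, ∃ i x, φ i x = w
  inter : ∀ i j x y, i ≠ j → φ i x = φ j y → ∃ q, x = u i q
  embed : ∀ i x y, G.Adj (φ i x) (φ i y) ↔ (Gs i).Adj x y
  no_extra : ∀ i j x y, i ≠ j → G.Adj (φ i x) (φ j y) →
    (∃ q, x = u i q) ∧ (∃ q', y = u j q')

/-- A cover is conducive to a clique `k : Fin p → V` if it is full and the induced
subcover on the clique admits a canonical labeling. -/
def DPCover.Conducive {V : Type} {G : SimpleGraph V} {m p : ℕ} (C : DPCover G m)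
    (k : Fin p → V) : Prop :=
  C.IsFull ∧ ∃ σ : Fin p → Equiv.Perm (Fin m),
    ∀ q q' : Fin p, q ≠ q' → ∀ j : Fin m, C.H.Adj (k q, σ q j) (k q', σ q' j)

/-- The `K`-canonical DP color function: the minimum number of colorings over all
`m`-fold covers conducive to the clique `k`. -/
noncomputable def PDPK {V : Type} (G : SimpleGraph V) {p : ℕ} (k : Fin p → V) (m : ℕ) : ℕ :=
  sInf {n : ℕ | ∃ C : DPCover G m, C.Conducive k ∧ dpCount C = n}

/-!
Fix for each `i` a cover `Dᵢ` of `Gᵢ` with `P'_DP(Gᵢ, Kᵢ, m)` colorings, relabelled so that its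
matchings inside `Kᵢ` are identities. Covers that are identities on the common clique glue to a
cover of `G` whose colorings are the families of colorings of the pieces agreeing on the clique.
Glue the `Dᵢ` after permuting the colors of each by some `τᵢ ∈ Sₘ`. For a fixed coloring `f` of
the clique, the sum over `τᵢ` of the number of colorings of `Dᵢ` extending `τᵢ ∘ f` is
`(m-p)! P'_DP(Gᵢ, Kᵢ, m)` if `f` is injective (each injection is hit `(m-p)!` times) and `0`
otherwise. So the `(m!)ⁿ` gluings have `m(m-1)⋯(m-p+1) ((m-p)!)ⁿ ∏ᵢ P'_DP(Gᵢ, Kᵢ, m)` colorings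
in total, and one of them has at most the average.
-/

open Function Finset

theorem Nat.card_subtype_eq_sum_card_fiber {α β : Type*} [Finite α] [Fintype β]
    (P : α → Prop) (r : α → β) :
    Nat.card {a // P a} = ∑ b, Nat.card {a // P a ∧ r a = b} := by
  rw [← Nat.card_sigma]
  exact Nat.card_congr ((Equiv.sigmaFiberEquiv fun a : {a // P a} => r a).symm.trans
    (Equiv.sigmaCongrRight fun b => Equiv.subtypeSubtypeEquivSubtypeInter P (r · = b)))

theorem exists_card_mul_le_sum {ι : Type*} [Fintype ι] [Nonempty ι] (f : ι → ℕ) :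
    ∃ i, Fintype.card ι * f i ≤ ∑ j, f j := by
  obtain ⟨i, -, hi⟩ := exists_min_image univ f univ_nonempty
  exact ⟨i, card_nsmul_le_sum univ f (f i) hi⟩

section PermComp

open scoped Nat

variable {ι α : Type*} [Fintype ι] [Fintype α]

theorem Equiv.Perm.card_comp_eq {f g : ι → α} (hf : Injective f) (hg : Injective g) :
    Nat.card {τ : Equiv.Perm α // ⇑τ ∘ f = g} = (Fintype.card α - Fintype.card ι)! := by
  classical
  let e : Set.range f ≃ Set.range g :=
    (Equiv.ofInjective f hf).symm.trans (Equiv.ofInjective g hg)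
  have key : {τ : Equiv.Perm α // ⇑τ ∘ f = g} ≃
      (((Set.range f)ᶜ : Set α) ≃ ((Set.range g)ᶜ : Set α)) := by
    refine (Equiv.subtypeEquivRight fun τ => ?_).trans (Equiv.Set.compl e)
    rw [funext_iff]
    constructor
    · rintro hτ ⟨_, q, rfl⟩
      simpa [e] using hτ q
    · intro hτ q
      simpa [e] using hτ ⟨f q, q, rfl⟩
  have hcard {h : ι → α} (hh : Injective h) :
      Fintype.card ((Set.range h)ᶜ : Set α) = Fintype.card α - Fintype.card ι := by
    rw [Fintype.card_compl_set, Set.card_range_of_injective hh]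
  rw [Nat.card_congr key, Nat.card_eq_fintype_card,
    Fintype.card_equiv (Fintype.equivOfCardEq ((hcard hf).trans (hcard hg).symm)), hcard hf]

theorem Equiv.Perm.sum_comp_of_injective {R : Type*} [AddCommMonoid R] [DecidableEq α]
    [DecidableEq ι] {M : (ι → α) → R} (hM : ∀ g, ¬ Injective g → M g = 0) {f : ι → α}
    (hf : Injective f) :
    ∑ τ : Equiv.Perm α, M (⇑τ ∘ f) = (Fintype.card α - Fintype.card ι)! • ∑ g, M g := by
  rw [← sum_fiberwise_of_maps_to' (g := fun τ : Equiv.Perm α => ⇑τ ∘ f) (t := univ)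
    (fun _ _ => mem_univ _) M, smul_sum]
  refine sum_congr rfl fun g _ => ?_
  rw [sum_const]
  by_cases hg : Injective g
  · rw [← Fintype.card_subtype, ← Nat.card_eq_fintype_card, Equiv.Perm.card_comp_eq hf hg]
  · rw [hM g hg, smul_zero, smul_zero]

end PermComp

namespace DPCover

open scoped Nat

variable {V : Type} {G : SimpleGraph V} {m : ℕ} {ι : Type*}

def canonical (G : SimpleGraph V) (m : ℕ) : DPCover G m where
  H := G □ ⊤
  part_complete _ _ _ hab := by simp [SimpleGraph.boxProd_adj, hab]
  cross _ _ _ _ huv had := by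
    simp only [SimpleGraph.boxProd_adj, huv, and_false, or_false] at had
    exact had.1
  matching_right _ _ _ _ _ huv h h' := by
    simp only [SimpleGraph.boxProd_adj, huv, and_false, or_false] at h h'
    exact h.2.symm.trans h'.2
  matching_left _ _ _ _ _ huv h h' := by
    simp only [SimpleGraph.boxProd_adj, huv, and_false, or_false] at h h'
    exact h.2.trans h'.2.symm

theorem conducive_canonical {p : ℕ} {k : Fin p → V}
    (hk : ∀ q q', q ≠ q' → G.Adj (k q) (k q')) : (canonical G m).Conducive k :=
  ⟨fun _ _ huv a => ⟨a, .inl ⟨huv, rfl⟩⟩, fun _ => 1, fun q q' hqq _ => .inl ⟨hk q q' hqq, rfl⟩⟩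

def relabel (C : DPCover G m) (π : V → Equiv.Perm (Fin m)) : DPCover G m where
  H := C.H.comap fun x => (x.1, π x.1 x.2)
  part_complete v _ _ hab := C.part_complete v _ _ ((π v).injective.ne hab)
  cross u v _ _ := C.cross u v _ _
  matching_right u v _ _ _ huv h h' := (π v).injective (C.matching_right u v _ _ _ huv h h')
  matching_left u v _ _ _ huv h h' := (π u).injective (C.matching_left u v _ _ _ huv h h')

theorem dpCount_relabel (C : DPCover G m) (π : V → Equiv.Perm (Fin m)) :
    dpCount (C.relabel π) = dpCount C :=
  Nat.card_congr <| (Equiv.piCongrRight π).subtypeEquiv fun _ => Iff.rfl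

noncomputable def extendCount (C : DPCover G m) (k : ι → V) (f : ι → Fin m) : ℕ :=
  Nat.card {c : V → Fin m // C.IsColoring c ∧ c ∘ k = f}

theorem dpCount_eq_sum_extendCount [Finite V] [Fintype ι] [DecidableEq ι]
    (C : DPCover G m) (k : ι → V) : dpCount C = ∑ f, C.extendCount k f :=
  Nat.card_subtype_eq_sum_card_fiber C.IsColoring (· ∘ k)

theorem extendCount_relabel (C : DPCover G m) (π : V → Equiv.Perm (Fin m)) (k : ι → V)
    (f : ι → Fin m) :
    (C.relabel π).extendCount k f = C.extendCount k fun q => π (k q) (f q) :=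
  Nat.card_congr <| (Equiv.piCongrRight π).subtypeEquiv fun c => and_congr Iff.rfl <| by
    simp only [funext_iff, comp_apply, Equiv.piCongrRight_apply, Pi.map_apply,
      (π _).injective.eq_iff]

/-- `C` is canonically labelled on `k`, with the identity permutations as labelling. -/
def IsIdentityOn (C : DPCover G m) (k : ι → V) : Prop :=
  ∀ q q', q ≠ q' → ∀ a, C.H.Adj (k q, a) (k q', a)

namespace IsIdentityOn

variable {C : DPCover G m} {k : ι → V}

theorem adj_iff (hC : C.IsIdentityOn k) (hk : Injective k) {q q' : ι} (hqq : q ≠ q')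
    {a b : Fin m} : C.H.Adj (k q, a) (k q', b) ↔ a = b :=
  ⟨fun had => C.matching_right _ _ _ _ _ (hk.ne hqq) (hC q q' hqq a) had,
    fun h => h ▸ hC q q' hqq a⟩

theorem relabel_const (hC : C.IsIdentityOn k) (τ : Equiv.Perm (Fin m)) :
    (C.relabel fun _ => τ).IsIdentityOn k :=
  fun q q' hqq a => hC q q' hqq (τ a)

theorem injective_comp (hC : C.IsIdentityOn k) {c : V → Fin m} (hc : C.IsColoring c) :
    Injective (c ∘ k) := by
  intro q q' hcq
  by_contra hqq
  exact hc (k q) (k q') (by rw [show c (k q') = c (k q) from hcq.symm]; exact hC q q' hqq _)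

theorem extendCount_eq_zero (hC : C.IsIdentityOn k) {f : ι → Fin m} (hf : ¬ Injective f) :
    C.extendCount k f = 0 :=
  Nat.card_eq_zero.2 <| .inl ⟨fun ⟨_, hc, hcf⟩ => hf (hcf ▸ hC.injective_comp hc)⟩

theorem sum_extendCount_perm_comp [Finite V] [Fintype ι] [DecidableEq ι] (hC : C.IsIdentityOn k)
    (f : ι → Fin m) :
    ∑ τ : Equiv.Perm (Fin m), C.extendCount k (⇑τ ∘ f) =
      if Injective f then (m - Fintype.card ι)! * dpCount C else 0 := by
  split_ifs with hf
  · rw [Equiv.Perm.sum_comp_of_injective (fun _ => hC.extendCount_eq_zero) hf, Fintype.card_fin,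
      smul_eq_mul, dpCount_eq_sum_extendCount C k]
  · exact sum_eq_zero fun τ _ => hC.extendCount_eq_zero fun hτf => hf hτf.of_comp

end IsIdentityOn

theorem Conducive.exists_relabel_isIdentityOn {p : ℕ} {C : DPCover G m} {k : Fin p → V}
    (hC : C.Conducive k) (hk : Injective k) : ∃ π, (C.relabel π).IsIdentityOn k := by
  obtain ⟨σ, hσ⟩ := hC.2
  refine ⟨extend k σ 1, fun q q' hqq j => ?_⟩
  show C.H.Adj (k q, extend k σ 1 (k q) j) (k q', extend k σ 1 (k q') j)
  rw [hk.extend_apply, hk.extend_apply]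
  exact hσ q q' hqq j

theorem exists_isIdentityOn_dpCount_eq_PDPK {p : ℕ} {k : Fin p → V} (hk : Injective k)
    (hclique : ∀ q q', q ≠ q' → G.Adj (k q) (k q')) :
    ∃ D : DPCover G m, D.IsIdentityOn k ∧ dpCount D = PDPK G k m := by
  have hne : {n | ∃ C : DPCover G m, C.Conducive k ∧ dpCount C = n}.Nonempty :=
    ⟨_, canonical G m, conducive_canonical hclique, rfl⟩
  obtain ⟨C, hC, hCcount⟩ := Nat.sInf_mem hne
  obtain ⟨π, hπ⟩ := hC.exists_relabel_isIdentityOn hk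
  exact ⟨C.relabel π, hπ, (dpCount_relabel C π).trans hCcount⟩

end DPCover

namespace IsCliqueGluing

variable {n p m : ℕ} {V : Fin n → Type} {W : Type} {Gs : ∀ i, SimpleGraph (V i)}
  {u : ∀ i, Fin p → V i} {G : SimpleGraph W} {φ : ∀ i, V i → W} (h : IsCliqueGluing Gs u G φ)
include h

theorem eq_clique_of_ne {i j : Fin n} {x : V i} {y : V j} (hij : i ≠ j) (hxy : φ i x = φ j y) :
    ∃ q, x = u i q ∧ y = u j q := by
  obtain ⟨q, rfl⟩ := h.inter i j x y hij hxy
  exact ⟨q, rfl, h.phi_inj j (hxy.symm.trans (h.glue i j q))⟩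

theorem ext_of_comp_eq {β : Type*} {c c' : W → β} (hcc : ∀ i, c ∘ φ i = c' ∘ φ i) : c = c' :=
  funext fun w => by
    obtain ⟨i, x, rfl⟩ := h.covers w
    exact congrFun (hcc i) x

theorem exists_comp_eq {β : Type*} (d : ∀ i, V i → β)
    (hd : ∀ i j q, d i (u i q) = d j (u j q)) : ∃ c : W → β, ∀ i, c ∘ φ i = d i := by
  have hwd {i j : Fin n} {x : V i} {y : V j} (hxy : φ i x = φ j y) : d i x = d j y := by
    rcases eq_or_ne i j with rfl | hij
    · rw [h.phi_inj i hxy]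
    · obtain ⟨q, rfl, rfl⟩ := h.eq_clique_of_ne hij hxy
      exact hd i j q
  choose ι x hx using h.covers
  exact ⟨fun w => d (ι w) (x w), fun i => funext fun y => hwd (hx (φ i y))⟩

variable (D : ∀ i, DPCover (Gs i) m)

def gluedGraph : SimpleGraph (W × Fin m) where
  Adj a b := ∃ i x y, φ i x = a.1 ∧ φ i y = b.1 ∧ (D i).H.Adj (x, a.2) (y, b.2)
  symm := ⟨fun _ _ ⟨i, x, y, hx, hy, hxy⟩ => ⟨i, y, x, hy, hx, hxy.symm⟩⟩
  loopless := ⟨fun _ ⟨i, x, y, hx, hy, hxy⟩ => hxy.ne (by rw [h.phi_inj i (hx.trans hy.symm)])⟩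

variable {D} (hD : ∀ i, (D i).IsIdentityOn (u i))
include hD

theorem gluedGraph_adj_iff {i : Fin n} {x y : V i} {a b : Fin m} :
    (h.gluedGraph D).Adj (φ i x, a) (φ i y, b) ↔ (D i).H.Adj (x, a) (y, b) := by
  refine ⟨fun ⟨j, x', y', hx', hy', had⟩ => ?_, fun had => ⟨i, x, y, rfl, rfl, had⟩⟩
  by_cases hji : j = i
  · subst hji
    rwa [← h.phi_inj j hx', ← h.phi_inj j hy']
  -- An edge coming from another piece joins two clique vertices, where all matchings are
  -- identities.
  obtain ⟨q, rfl, rfl⟩ := h.eq_clique_of_ne hji hx'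
  obtain ⟨q', rfl, rfl⟩ := h.eq_clique_of_ne hji hy'
  by_cases hqq : q = q'
  · subst hqq
    exact (D i).part_complete _ _ _ fun hab => had.ne (by rw [hab])
  · rw [(hD i).adj_iff (h.u_inj i) hqq]
    exact ((hD j).adj_iff (h.u_inj j) hqq).1 had

def gluedCover : DPCover G m where
  H := h.gluedGraph D
  part_complete w a b hab := by
    obtain ⟨i, x, rfl⟩ := h.covers w
    exact ⟨i, x, x, rfl, rfl, (D i).part_complete x a b hab⟩
  cross w w' a b hww := by
    rintro ⟨i, x, y, hx : φ i x = w, hy : φ i y = w', had⟩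
    subst hx hy
    exact (h.embed i x y).2 ((D i).cross x y a b (ne_of_apply_ne _ hww) had)
  matching_right w w' a b b' hww := by
    rintro ⟨i, x, y, hx : φ i x = w, hy : φ i y = w', had⟩ had'
    subst hx hy
    exact (D i).matching_right x y a b b' (ne_of_apply_ne _ hww) had
      ((h.gluedGraph_adj_iff hD).1 had')
  matching_left w w' a a' b hww := by
    rintro ⟨i, x, y, hx : φ i x = w, hy : φ i y = w', had⟩ had'
    subst hx hy
    exact (D i).matching_left x y a a' b (ne_of_apply_ne _ hww) had
      ((h.gluedGraph_adj_iff hD).1 had')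

theorem isColoring_gluedCover_iff {c : W → Fin m} :
    (h.gluedCover hD).IsColoring c ↔ ∀ i, (D i).IsColoring (c ∘ φ i) := by
  refine ⟨fun hc i x y had => hc (φ i x) (φ i y) ⟨i, x, y, rfl, rfl, had⟩, ?_⟩
  rintro hc w w' ⟨i, x, y, hx : φ i x = w, hy : φ i y = w', had⟩
  subst hx hy
  exact hc i x y had

theorem extendCount_gluedCover (i₀ : Fin n) (f : Fin p → Fin m) :
    (h.gluedCover hD).extendCount (φ i₀ ∘ u i₀) f = ∏ i, (D i).extendCount (u i) f := by
  simp only [DPCover.extendCount, ← Nat.card_pi]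
  refine Nat.card_eq_of_bijective (fun c i => ⟨c.1 ∘ φ i,
    (h.isColoring_gluedCover_iff hD).1 c.2.1 i,
    (funext fun q => congrArg c.1 (h.glue i i₀ q)).trans c.2.2⟩) ⟨fun c c' hcc => ?_, fun d => ?_⟩
  · exact Subtype.ext (h.ext_of_comp_eq fun i => congrArg Subtype.val (congrFun hcc i))
  · obtain ⟨c, hc⟩ := h.exists_comp_eq (fun i => (d i).1)
      fun i j q => (congrFun (d i).2.2 q).trans (congrFun (d j).2.2 q).symm
    refine ⟨⟨c, (h.isColoring_gluedCover_iff hD).2 fun i => (hc i).symm ▸ (d i).2.1, ?_⟩,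
      funext fun i => Subtype.ext (hc i)⟩
    rw [← comp_assoc, hc i₀]
    exact (d i₀).2.2

theorem dpCount_gluedCover [Finite W] (i₀ : Fin n) :
    dpCount (h.gluedCover hD) = ∑ f : Fin p → Fin m, ∏ i, (D i).extendCount (u i) f := by
  rw [DPCover.dpCount_eq_sum_extendCount _ (φ i₀ ∘ u i₀)]
  exact sum_congr rfl fun f _ => h.extendCount_gluedCover hD i₀ f

theorem sum_dpCount_gluedCover_relabel [Finite W] [∀ i, Finite (V i)] (hn : 0 < n) :
    ∑ τ : Fin n → Equiv.Perm (Fin m), dpCount (h.gluedCover fun i => (hD i).relabel_const (τ i)) =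
      m.descFactorial p * ((m - p).factorial ^ n * ∏ i, dpCount (D i)) := by
  calc _ = ∑ τ : Fin n → Equiv.Perm (Fin m), ∑ f : Fin p → Fin m,
          ∏ i, (D i).extendCount (u i) (⇑(τ i) ∘ f) := by
        simp only [h.dpCount_gluedCover _ ⟨0, hn⟩, DPCover.extendCount_relabel]
        rfl
    _ = ∑ f : Fin p → Fin m, ∏ i, ∑ τ : Equiv.Perm (Fin m),
          (D i).extendCount (u i) (⇑τ ∘ f) := by
        rw [sum_comm]
        simp only [prod_univ_sum, Fintype.piFinset_univ]
    _ = ∑ f : Fin p → Fin m,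
          if Injective f then (m - p).factorial ^ n * ∏ i, dpCount (D i) else 0 := by
        refine sum_congr rfl fun f _ => ?_
        simp only [(hD _).sum_extendCount_perm_comp, Fintype.card_fin]
        split_ifs <;> simp [prod_mul_distrib, hn.ne']
    _ = _ := by
        rw [sum_ite, sum_const_zero, add_zero, sum_const, smul_eq_mul, ← Fintype.card_subtype,
          Fintype.card_congr (Equiv.subtypeInjectiveEquivEmbedding _ _), Fintype.card_embedding_eq,
          Fintype.card_fin, Fintype.card_fin]

end IsCliqueGluing

theorem PDP_cliqueGluing_le_PDPK {n p m : ℕ} (hn : 2 ≤ n) (hm : p ≤ m)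
    {V : Fin n → Type} [∀ i, Fintype (V i)] {W : Type} [Fintype W]
    (Gs : ∀ i, SimpleGraph (V i)) (u : ∀ i, Fin p → V i)
    (G : SimpleGraph W) (φ : ∀ i, V i → W)
    (h : IsCliqueGluing Gs u G φ) :
    PDP G m * (∏ i ∈ Finset.range p, (m - i)) ^ (n - 1) ≤
      ∏ i : Fin n, PDPK (Gs i) (u i) m := by
  choose D hD hDcount using fun i =>
    DPCover.exists_isIdentityOn_dpCount_eq_PDPK (m := m) (h.u_inj i) (h.clique i)
  obtain ⟨τ, hτ⟩ := exists_card_mul_le_sum fun τ : Fin n → Equiv.Perm (Fin m) =>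
    dpCount (h.gluedCover fun i => (hD i).relabel_const (τ i))
  rw [h.sum_dpCount_gluedCover_relabel hD (by omega), Fintype.card_fun, Fintype.card_perm,
    Fintype.card_fin, Fintype.card_fin, ← Nat.factorial_mul_descFactorial hm] at hτ
  have hPDP : PDP G m ≤ dpCount (h.gluedCover fun i => (hD i).relabel_const (τ i)) :=
    Nat.sInf_le ⟨_, rfl⟩
  rw [← Nat.descFactorial_eq_prod_range, ← prod_congr rfl fun i _ => hDcount i]
  set E := (m - p).factorial
  set F := m.descFactorial p
  have hE : 0 < E := Nat.factorial_pos _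
  have hF : 0 < F := Nat.descFactorial_pos.2 hm
  refine Nat.le_of_mul_le_mul_right ?_ (mul_pos (pow_pos hE n) hF)
  calc PDP G m * F ^ (n - 1) * (E ^ n * F) = (E * F) ^ n * PDP G m := by
        rw [mul_pow, ← pow_sub_one_mul (show n ≠ 0 by omega) F]
        ring
    _ ≤ F * (E ^ n * ∏ i, dpCount (D i)) := le_trans (by gcongr) hτ
    _ = (∏ i, dpCount (D i)) * (E ^ n * F) := by ring
end

section
/- For a cycle C_n with vertices s_1,…,s_n in cyclic order and any full m-fold cover H = (L,H) of C_n, the subcover corresponding to the path C_n − {s_1s_2} admits a canonical labeling, and for any p_1 ∈ L(s_1), p_2 ∈ L(s_2) with p_1p_2 ∉ E(H), the count N({p_1,p_2}, H) equals either P(C_n,m)/(m(m-1)) or P(C_{n-1},m)/m, according to whether the corresponding canonical indices of p_1 and p_2 differ or agree. -/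
/-!
Write `s₁ = 0`, `s₂ = 1`. Composing the perfect matchings of a full cover along the path
`1, 2, …, n - 1, 0` gives a canonical labeling `σ` of the subcover over `Cₙ − s₁s₂`. In these
coordinates, `c ↦ (i ↦ σᵢ⁻¹ (c i))` turns the `H`-colorings through `p₁, p₂` into the proper
colorings of that path with end colors `σ₁⁻¹ p₁` and `σ₂⁻¹ p₂`; the remaining edge `s₁s₂`
imposes nothing more because `p₁p₂ ∉ E(H)`. Permuting colors shows that this number is the same
for all pairs of distinct end colors, and summing over the `m (m - 1)` pairs gives `P(Cₙ, m)`.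
When the end colors agree, gluing `s₁` to `s₂` makes these the proper colorings of `Cₙ₋₁` with
one vertex colored in advance, and `m` times their number is `P(Cₙ₋₁, m)`.
-/

open SimpleGraph

open Equiv

section ColorSymmetry

variable {V α : Type*}

theorem Nat.card_eq_card_mul_of_card_fiber_eq {X Y : Type*} [Finite X] [Fintype Y] (f : X → Y)
    {k : ℕ} (hk : ∀ y, Nat.card {x // f x = y} = k) : Nat.card X = Nat.card Y * k := by
  rw [← Nat.card_congr (sigmaFiberEquiv f), Nat.card_sigma, Finset.sum_congr rfl fun y _ => hk y,
    Finset.sum_const, Finset.card_univ, smul_eq_mul, Nat.card_eq_fintype_card]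

theorem Nat.card_subtype_fst_ne_snd [Fintype α] :
    Nat.card {p : α × α // p.1 ≠ p.2} = Fintype.card α * (Fintype.card α - 1) := by
  classical
  rw [Nat.card_eq_fintype_card, Fintype.card_subtype, Nat.mul_sub_one, ← Finset.card_univ,
    ← Finset.offDiag_card]
  congr 1
  ext
  simp

variable (Q : (V → α) → Prop)

theorem card_subtype_and_congr_perm (hQ : ∀ (π : Perm α) d, Q d → Q (π ∘ d)) (π : Perm α)
    {R R' : (V → α) → Prop} (h : ∀ d, R' d ↔ R (π ∘ d)) :
    Nat.card {d // Q d ∧ R' d} = Nat.card {d // Q d ∧ R d} :=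
  Nat.card_congr <| (piCongrRight fun _ => π).subtypeEquiv fun d =>
    ⟨fun hd => ⟨hQ π d hd.1, (h d).1 hd.2⟩,
     fun hd => ⟨by simpa [Function.comp_def] using hQ π⁻¹ _ hd.1, (h d).2 hd.2⟩⟩

theorem card_eq_card_mul_card_eval_eq [Finite V] [Fintype α]
    (hQ : ∀ (π : Perm α) d, Q d → Q (π ∘ d)) (u : V) (x : α) :
    Nat.card {d // Q d} = Fintype.card α * Nat.card {d // Q d ∧ d u = x} := by
  classical
  rw [Nat.card_eq_card_mul_of_card_fiber_eq (fun d : {d // Q d} => d.1 u) fun y => ?_,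
    Nat.card_eq_fintype_card]
  rw [Nat.card_congr (subtypeSubtypeEquivSubtypeInter Q (fun d => d u = y))]
  exact card_subtype_and_congr_perm Q hQ (swap x y) fun d => by simp [swap_apply_eq_iff]

theorem card_ne_eq_mul_card_eval_eq_eval_eq [Finite V] [Fintype α]
    (hQ : ∀ (π : Perm α) d, Q d → Q (π ∘ d)) (u v : V) {x y : α} (hxy : x ≠ y) :
    Nat.card {d // Q d ∧ d u ≠ d v} =
      Fintype.card α * (Fintype.card α - 1) * Nat.card {d // Q d ∧ d u = x ∧ d v = y} := by
  classical
  let ends (d : {d // Q d ∧ d u ≠ d v}) : {p : α × α // p.1 ≠ p.2} := ⟨(d.1 u, d.1 v), d.2.2⟩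
  rw [Nat.card_eq_card_mul_of_card_fiber_eq ends fun p => ?_, Nat.card_subtype_fst_ne_snd]
  obtain ⟨⟨x', y'⟩, hxy'⟩ := p
  obtain ⟨π, hπ⟩ := Perm.exists_extending_pair ![x', y'] ![x, y]
    (injective_pair_iff_ne.2 hxy') (injective_pair_iff_ne.2 hxy)
  have hx : π x' = x := hπ 0
  have hy : π y' = y := hπ 1
  rw [← card_subtype_and_congr_perm Q hQ π (R' := fun d => d u = x' ∧ d v = y') fun d => by
    simp only [← hx, ← hy, Function.comp_apply, π.injective.eq_iff]]
  refine Nat.card_congr <| (subtypeEquivRight fun d => Subtype.ext_iff).trans <|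
    (subtypeSubtypeEquivSubtypeInter _ (fun d : V → α => (d u, d v) = (x', y'))).trans <|
    subtypeEquivRight fun d => ?_
  simp only [Prod.mk.injEq]
  exact ⟨fun ⟨⟨hd, _⟩, h⟩ => ⟨hd, h⟩,
    fun ⟨hd, hu, hv⟩ => ⟨⟨hd, hu ▸ hv ▸ hxy'⟩, hu, hv⟩⟩

end ColorSymmetry

namespace DPCover

variable {V : Type} {G : SimpleGraph V} {m : ℕ} (C : DPCover G m)

theorem isColoring_iff_forall_adj {c : V → Fin m} :
    C.IsColoring c ↔ ∀ u v, G.Adj u v → ¬ C.H.Adj (u, c u) (v, c v) := by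
  refine ⟨fun h u v _ => h u v, fun h u v huv => ?_⟩
  by_cases hne : u = v
  · subst hne
    exact C.H.irrefl huv
  · exact h u v (C.cross u v _ _ hne huv) huv

theorem adj_iff_symm_eq_symm {u v : V} (huv : u ≠ v) {σ τ : Perm (Fin m)}
    (h : ∀ j, C.H.Adj (u, σ j) (v, τ j)) {x y : Fin m} :
    C.H.Adj (u, x) (v, y) ↔ σ.symm x = τ.symm y := by
  have hx := h (σ.symm x)
  rw [σ.apply_symm_apply] at hx
  refine ⟨fun hxy => ?_, fun hxy => ?_⟩
  · rw [C.matching_right u v x y _ huv hxy hx, τ.symm_apply_apply]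
  · rwa [hxy, τ.apply_symm_apply] at hx

theorem IsFull.exists_perm_adj_iff {C : DPCover G m} (hC : C.IsFull) {u v : V}
    (huv : G.Adj u v) :
    ∃ e : Perm (Fin m), ∀ x y, C.H.Adj (u, x) (v, y) ↔ y = e x := by
  choose f hf using hC u v huv
  have hinj : Function.Injective f := fun a a' h =>
    C.matching_left u v a a' (f a) huv.ne (hf a) (h ▸ hf a')
  refine ⟨.ofBijective f hinj.bijective_of_finite, fun x y => ⟨fun hxy => ?_, ?_⟩⟩
  · exact C.matching_right u v x y (f x) huv.ne hxy (hf x)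
  · rintro rfl
    exact hf x

theorem IsFull.exists_canonical_along {C : DPCover G m} (hC : C.IsFull) {N : ℕ}
    (p : Fin (N + 1) → V) (hp : ∀ i : Fin N, G.Adj (p i.castSucc) (p i.succ)) :
    ∃ τ : Fin (N + 1) → Perm (Fin m), ∀ (i : Fin N) j,
      C.H.Adj (p i.castSucc, τ i.castSucc j) (p i.succ, τ i.succ j) := by
  choose e he using fun i => hC.exists_perm_adj_iff (hp i)
  refine ⟨Fin.induction 1 fun i ρ => e i * ρ, fun i j => (he i _ _).2 ?_⟩
  simp [Fin.induction_succ]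

end DPCover

section Cycle

variable {n : ℕ}

/-- Proper colorings of the path `1, 2, …, n + 1, 0`, i.e. of `cycleGraph (n + 2)` without the
edge `{0, 1}`. -/
def IsPathColoring {α : Type*} (d : Fin (n + 2) → α) : Prop :=
  ∀ i : Fin (n + 1), d i.succ ≠ d (i.succ + 1)

theorem IsPathColoring.comp {α β : Type*} {d : Fin (n + 2) → α} (hd : IsPathColoring d)
    {f : α → β} (hf : Function.Injective f) : IsPathColoring (f ∘ d) :=
  fun i h => hd i (hf h)

theorem SimpleGraph.cycleGraph_adj_iff_eq_add_one {u v : Fin (n + 2)} :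
    (cycleGraph (n + 2)).Adj u v ↔ v = u + 1 ∨ u = v + 1 := by
  rw [cycleGraph_adj, sub_eq_iff_eq_add, sub_eq_iff_eq_add, add_comm v, add_comm u, or_comm]

theorem SimpleGraph.forall_cycleGraph_adj_iff {r : Fin (n + 2) → Fin (n + 2) → Prop}
    (hr : ∀ u v, r u v → r v u) :
    (∀ u v, (cycleGraph (n + 2)).Adj u v → r u v) ↔ ∀ i, r i (i + 1) := by
  refine ⟨fun h i => h _ _ (cycleGraph_adj_iff_eq_add_one.2 (.inl rfl)), fun h u v huv => ?_⟩
  rcases cycleGraph_adj_iff_eq_add_one.1 huv with rfl | rfl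
  · exact h u
  · exact hr _ _ (h v)

theorem properCount_cycleGraph (m : ℕ) :
    properCount (cycleGraph (n + 2)) m =
      Nat.card {d : Fin (n + 2) → Fin m // ∀ i, d i ≠ d (i + 1)} :=
  Nat.card_congr <| subtypeEquivRight fun _ => forall_cycleGraph_adj_iff fun _ _ => Ne.symm

theorem properCount_cycleGraph_eq_mul_card_eval_eq (m : ℕ) (x : Fin m) :
    properCount (cycleGraph (n + 2)) m =
      m * Nat.card {d : Fin (n + 2) → Fin m // (∀ i, d i ≠ d (i + 1)) ∧ d 0 = x} := by
  rw [properCount_cycleGraph, card_eq_card_mul_card_eval_eq _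
    (fun π d hd i h => hd i (π.injective h)) 0 x, Fintype.card_fin]

theorem properCount_cycleGraph_eq_mul_card_isPathColoring {m : ℕ} {x y : Fin m} (hxy : x ≠ y) :
    properCount (cycleGraph (n + 2)) m =
      m * (m - 1) *
        Nat.card {d : Fin (n + 2) → Fin m // IsPathColoring d ∧ d 0 = x ∧ d 1 = y} := by
  have := card_ne_eq_mul_card_eval_eq_eval_eq
    (IsPathColoring (n := n)) (fun π _ hd => hd.comp π.injective) 0 1 hxy
  rw [Fintype.card_fin] at this
  rw [properCount_cycleGraph, ← this]
  exact Nat.card_congr <| subtypeEquivRight fun d => by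
    rw [IsPathColoring, Fin.forall_fin_succ, zero_add, and_comm]

theorem Fin.cons_zero_succ_add_one {α : Type*} (e : Fin (n + 1) → α) (i : Fin (n + 1)) :
    (Fin.cons (e 0) e : Fin (n + 2) → α) (i.succ + 1) = e (i + 1) := by
  induction i using Fin.lastCases with
  | last => simp [Fin.last_add_one]
  | cast i => rw [Fin.succ_castSucc, Fin.coeSucc_eq_succ, Fin.coeSucc_eq_succ, Fin.cons_succ]

theorem card_isPathColoring_contract {α : Type*} (j : α) :
    Nat.card {d : Fin (n + 3) → α // IsPathColoring d ∧ d 0 = j ∧ d 1 = j} =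
      Nat.card {e : Fin (n + 2) → α // (∀ i, e i ≠ e (i + 1)) ∧ e 0 = j} := by
  have key (e : Fin (n + 2) → α) :
      IsPathColoring (Fin.cons (e 0) e : Fin (n + 3) → α) ↔ ∀ i, e i ≠ e (i + 1) := by
    simp only [IsPathColoring, Fin.cons_succ, Fin.cons_zero_succ_add_one]
  refine Nat.card_congr
    { toFun := fun d => ⟨Fin.tail d.1, ?_⟩
      invFun := fun e => ⟨Fin.cons j e.1, ?_⟩
      left_inv := fun d => Subtype.ext (d.2.2.1 ▸ Fin.cons_self_tail d.1)
      right_inv := fun _ => rfl }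
  · obtain ⟨d, hcyc, h0, h1⟩ := d
    have hd : Fin.cons (Fin.tail d 0) (Fin.tail d) = d := by
      rw [Fin.tail, Fin.succ_zero_eq_one, h1, ← h0, Fin.cons_self_tail]
    exact ⟨(key _).1 (by rwa [hd]), h1⟩
  · obtain ⟨e, hcyc, rfl⟩ := e
    exact ⟨(key e).2 hcyc, rfl, rfl⟩

end Cycle

namespace DPCover

variable {n m : ℕ}

def IsPathLabeling (C : DPCover (cycleGraph (n + 2)) m) (σ : Fin (n + 2) → Perm (Fin m)) :
    Prop :=
  ∀ (i : Fin (n + 1)) j, C.H.Adj (i.succ, σ i.succ j) (i.succ + 1, σ (i.succ + 1) j)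

theorem IsFull.exists_isPathLabeling {C : DPCover (cycleGraph (n + 2)) m}
    (hC : C.IsFull) : ∃ σ, C.IsPathLabeling σ := by
  obtain ⟨τ, hτ⟩ := hC.exists_canonical_along (fun k => k + 1)
    fun k => cycleGraph_adj_iff_eq_add_one.2 (.inl (by rw [← Fin.coeSucc_eq_succ]))
  exact ⟨fun v => τ (v - 1), fun i j => by
    simpa only [← Fin.coeSucc_eq_succ, add_sub_cancel_right] using hτ i j⟩

variable {C : DPCover (cycleGraph (n + 2)) m} {σ : Fin (n + 2) → Perm (Fin m)}

theorem isColoring_iff_of_isPathLabeling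
    (hσ : C.IsPathLabeling σ)
    {c : Fin (n + 2) → Fin m} :
    C.IsColoring c ↔ ¬ C.H.Adj (0, c 0) (1, c 1) ∧
      IsPathColoring fun i => (σ i).symm (c i) := by
  rw [isColoring_iff_forall_adj, forall_cycleGraph_adj_iff fun _ _ h h' => h h'.symm,
    Fin.forall_fin_succ, zero_add]
  refine and_congr_right' (forall_congr' fun i => not_congr (C.adj_iff_symm_eq_symm ?_ (hσ i)))
  exact (cycleGraph_adj_iff_eq_add_one.2 (.inl rfl)).ne

theorem nCount_pair_eq_card
    (hσ : C.IsPathLabeling σ)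
    {a b : Fin m} (hab : ¬ C.H.Adj (0, a) (1, b)) :
    NCount C {(0, a), (1, b)} = Nat.card {d : Fin (n + 2) → Fin m //
      IsPathColoring d ∧ d 0 = (σ 0).symm a ∧ d 1 = (σ 1).symm b} := by
  refine Nat.card_congr ((piCongrRight fun i => (σ i).symm).subtypeEquiv fun c => ?_)
  simp only [Set.forall_mem_insert, Set.mem_singleton_iff, forall_eq,
    isColoring_iff_of_isPathLabeling hσ, piCongrRight_apply, Pi.map_apply,
    EquivLike.apply_eq_iff_eq]
  constructor
  · rintro ⟨⟨-, hc⟩, rfl, rfl⟩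
    exact ⟨hc, rfl, rfl⟩
  · rintro ⟨hc, rfl, rfl⟩
    exact ⟨⟨hab, hc⟩, rfl, rfl⟩

end DPCover

theorem cycle_cover_NCount {n m : ℕ} (hn : 3 ≤ n)
    (C : DPCover (SimpleGraph.cycleGraph n) m) (hfull : C.IsFull) :
    ∃ σ : Fin n → Equiv.Perm (Fin m),
      -- a canonical labeling of the subcover corresponding to the path `Cₙ − s₁s₂`:
      (∀ i i' : Fin n, (SimpleGraph.cycleGraph n).Adj i i' →
        ¬ ((i = ⟨0, by omega⟩ ∧ i' = ⟨1, by omega⟩) ∨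
           (i = ⟨1, by omega⟩ ∧ i' = ⟨0, by omega⟩)) →
        ∀ j : Fin m, C.H.Adj (i, σ i j) (i', σ i' j)) ∧
      -- the counts, according to whether the canonical indices differ or agree:
      (∀ a b : Fin m, ¬ C.H.Adj ((⟨0, by omega⟩ : Fin n), a) (⟨1, by omega⟩, b) →
        (((σ ⟨0, by omega⟩).symm a ≠ (σ ⟨1, by omega⟩).symm b →
          NCount C ({((⟨0, by omega⟩ : Fin n), a), (⟨1, by omega⟩, b)} :
              Set (Fin n × Fin m)) * (m * (m - 1)) =
            properCount (SimpleGraph.cycleGraph n) m) ∧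
        ((σ ⟨0, by omega⟩).symm a = (σ ⟨1, by omega⟩).symm b →
          NCount C ({((⟨0, by omega⟩ : Fin n), a), (⟨1, by omega⟩, b)} :
              Set (Fin n × Fin m)) * m =
            properCount (SimpleGraph.cycleGraph (n - 1)) m))) := by
  obtain ⟨k, rfl⟩ : ∃ k, n = k + 3 := ⟨n - 3, by omega⟩
  simp only [show (⟨0, by omega⟩ : Fin (k + 3)) = 0 from rfl,
    show (⟨1, by omega⟩ : Fin (k + 3)) = 1 from rfl]
  obtain ⟨σ, hσ⟩ := hfull.exists_isPathLabeling
  refine ⟨σ, fun i i' hadj hne j => ?_, fun a b hab => ⟨fun hne => ?_, fun heq => ?_⟩⟩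
  · rcases cycleGraph_adj_iff_eq_add_one.1 hadj with rfl | rfl
    · obtain ⟨i, rfl⟩ := Fin.exists_succ_eq.2 fun h => hne (.inl ⟨h, by rw [h, zero_add]⟩)
      exact hσ i j
    · obtain ⟨i', rfl⟩ := Fin.exists_succ_eq.2 fun h => hne (.inr ⟨by rw [h, zero_add], h⟩)
      exact (hσ i' j).symm
  · rw [DPCover.nCount_pair_eq_card hσ hab,
      properCount_cycleGraph_eq_mul_card_isPathColoring hne, mul_comm]
  · rw [DPCover.nCount_pair_eq_card hσ hab, ← heq, card_isPathColoring_contract,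
      show k + 3 - 1 = k + 2 from rfl, properCount_cycleGraph_eq_mul_card_eval_eq m, mul_comm]
end
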